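/- Suppose z ∈ ℂ∖{0} is such that the nonnegative matrix series N1(|z|), G1(|z|) and R1(|z|) converge entrywise, and define H1(z) = A_{*,0}(z) + A_{*,1}(z)·N1(z)·A_{*,−1}(z). Then for every w ∈ ℂ∖{0}: I − C(z,w) = (w^{−1}·I − R1(z)) · (I − H1(z)) · (w·I − G1(z)). -/

import Mathlib

namespace QBDSeries

/-- The index set `H = {-1, 0, 1}`. -/
def Hs : Finset ℤ := {-1, 0, 1}

/-- Partial sum of the first `k` entries of a sequence `σ : Fin n → ℤ`. -/
def psum {n : ℕ} (σ : Fin n → ℤ) (k : ℕ) : ℤ :=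
  ∑ i ∈ Finset.univ.filter (fun i : Fin n => (i : ℕ) < k), σ i

/-- Condition defining the index set `𝓘_n`. -/
def condQ (n : ℕ) (σ : Fin n → ℤ) : Prop :=
  (∀ k : ℕ, 1 ≤ k → k ≤ n - 1 → 0 ≤ psum σ k) ∧ psum σ n = 0

/-- Condition defining the index set `𝓘_{D,n}`. -/
def condD (n : ℕ) (σ : Fin n → ℤ) : Prop :=
  (∀ k : ℕ, 1 ≤ k → k ≤ n - 1 → 0 ≤ psum σ k) ∧ psum σ n = -1

/-- Condition defining the index set `𝓘_{U,n}`. -/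
def condU (n : ℕ) (σ : Fin n → ℤ) : Prop :=
  (∀ k : ℕ, 1 ≤ k → k ≤ n - 1 → 1 ≤ psum σ k) ∧ psum σ n = 1

/-- `A_{*,i}(z) = Σ_{j∈H} A_{j,i} z^j` over `ℂ`. -/
noncomputable def AstarC (s0 : ℕ) (A : ℤ → ℤ → Matrix (Fin s0) (Fin s0) ℝ) (z : ℂ) (i : ℤ) :
    Matrix (Fin s0) (Fin s0) ℂ :=
  ∑ j ∈ Hs, (z ^ j) • (A j i).map Complex.ofReal

/-- `A_{*,i}(z) = Σ_{j∈H} A_{j,i} z^j` over `ℝ`. -/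
noncomputable def AstarR (s0 : ℕ) (A : ℤ → ℤ → Matrix (Fin s0) (Fin s0) ℝ) (z : ℝ) (i : ℤ) :
    Matrix (Fin s0) (Fin s0) ℝ :=
  ∑ j ∈ Hs, (z ^ j) • A j i

open Classical in
/-- `Σ_{σ ∈ cond} A_{*,σ1}(z)⋯A_{*,σn}(z)` over `ℂ`. -/
noncomputable def pathSumC (s0 : ℕ) (A : ℤ → ℤ → Matrix (Fin s0) (Fin s0) ℝ) (z : ℂ) (n : ℕ)
    (cond : (Fin n → ℤ) → Prop) : Matrix (Fin s0) (Fin s0) ℂ :=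
  ∑ σ : Fin n → {x : ℤ // x ∈ Hs},
    if cond (fun k => (σ k : ℤ)) then (List.ofFn fun k : Fin n => AstarC s0 A z (σ k : ℤ)).prod
    else 0

open Classical in
/-- `Σ_{σ ∈ cond} A_{*,σ1}(z)⋯A_{*,σn}(z)` over `ℝ`. -/
noncomputable def pathSumR (s0 : ℕ) (A : ℤ → ℤ → Matrix (Fin s0) (Fin s0) ℝ) (z : ℝ) (n : ℕ)
    (cond : (Fin n → ℤ) → Prop) : Matrix (Fin s0) (Fin s0) ℝ :=
  ∑ σ : Fin n → {x : ℤ // x ∈ Hs},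
    if cond (fun k => (σ k : ℤ)) then (List.ofFn fun k : Fin n => AstarR s0 A z (σ k : ℤ)).prod
    else 0

/-- `Q^{(n)}(z)` (complex); `Q^{(0)}(z) = I`. -/
noncomputable def QmatC (s0 : ℕ) (A : ℤ → ℤ → Matrix (Fin s0) (Fin s0) ℝ) (z : ℂ) (n : ℕ) :
    Matrix (Fin s0) (Fin s0) ℂ := pathSumC s0 A z n (condQ n)

/-- `D^{(n)}(z)` (complex); it vanishes for `n = 0`. -/
noncomputable def DmatC (s0 : ℕ) (A : ℤ → ℤ → Matrix (Fin s0) (Fin s0) ℝ) (z : ℂ) (n : ℕ) :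
    Matrix (Fin s0) (Fin s0) ℂ := pathSumC s0 A z n (condD n)

/-- `U^{(n)}(z)` (complex); it vanishes for `n = 0`. -/
noncomputable def UmatC (s0 : ℕ) (A : ℤ → ℤ → Matrix (Fin s0) (Fin s0) ℝ) (z : ℂ) (n : ℕ) :
    Matrix (Fin s0) (Fin s0) ℂ := pathSumC s0 A z n (condU n)

/-- `Q^{(n)}(z)` (real). -/
noncomputable def QmatR (s0 : ℕ) (A : ℤ → ℤ → Matrix (Fin s0) (Fin s0) ℝ) (z : ℝ) (n : ℕ) :
    Matrix (Fin s0) (Fin s0) ℝ := pathSumR s0 A z n (condQ n)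

/-- `D^{(n)}(z)` (real). -/
noncomputable def DmatR (s0 : ℕ) (A : ℤ → ℤ → Matrix (Fin s0) (Fin s0) ℝ) (z : ℝ) (n : ℕ) :
    Matrix (Fin s0) (Fin s0) ℝ := pathSumR s0 A z n (condD n)

/-- `U^{(n)}(z)` (real). -/
noncomputable def UmatR (s0 : ℕ) (A : ℤ → ℤ → Matrix (Fin s0) (Fin s0) ℝ) (z : ℝ) (n : ℕ) :
    Matrix (Fin s0) (Fin s0) ℝ := pathSumR s0 A z n (condU n)

/-- `N1(z) = Σ_{n≥0} Q^{(n)}(z)`, entrywise (complex). -/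
noncomputable def N1C (s0 : ℕ) (A : ℤ → ℤ → Matrix (Fin s0) (Fin s0) ℝ) (z : ℂ) :
    Matrix (Fin s0) (Fin s0) ℂ := Matrix.of fun i j => ∑' n : ℕ, QmatC s0 A z n i j

/-- `G1(z) = Σ_{n≥1} D^{(n)}(z)`, entrywise (complex). -/
noncomputable def G1C (s0 : ℕ) (A : ℤ → ℤ → Matrix (Fin s0) (Fin s0) ℝ) (z : ℂ) :
    Matrix (Fin s0) (Fin s0) ℂ := Matrix.of fun i j => ∑' n : ℕ, DmatC s0 A z n i j

/-- `R1(z) = Σ_{n≥1} U^{(n)}(z)`, entrywise (complex). -/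
noncomputable def R1C (s0 : ℕ) (A : ℤ → ℤ → Matrix (Fin s0) (Fin s0) ℝ) (z : ℂ) :
    Matrix (Fin s0) (Fin s0) ℂ := Matrix.of fun i j => ∑' n : ℕ, UmatC s0 A z n i j

/-- `N1(z)` (real). -/
noncomputable def N1R (s0 : ℕ) (A : ℤ → ℤ → Matrix (Fin s0) (Fin s0) ℝ) (z : ℝ) :
    Matrix (Fin s0) (Fin s0) ℝ := Matrix.of fun i j => ∑' n : ℕ, QmatR s0 A z n i j

/-- `G1(z)` (real). -/
noncomputable def G1R (s0 : ℕ) (A : ℤ → ℤ → Matrix (Fin s0) (Fin s0) ℝ) (z : ℝ) :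
    Matrix (Fin s0) (Fin s0) ℝ := Matrix.of fun i j => ∑' n : ℕ, DmatR s0 A z n i j

/-- `R1(z)` (real). -/
noncomputable def R1R (s0 : ℕ) (A : ℤ → ℤ → Matrix (Fin s0) (Fin s0) ℝ) (z : ℝ) :
    Matrix (Fin s0) (Fin s0) ℝ := Matrix.of fun i j => ∑' n : ℕ, UmatR s0 A z n i j

/-- `C(z,w) = Σ_{i,j∈H} A_{i,j} z^i w^j` over `ℂ`. -/
noncomputable def CmatC (s0 : ℕ) (A : ℤ → ℤ → Matrix (Fin s0) (Fin s0) ℝ) (z w : ℂ) :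
    Matrix (Fin s0) (Fin s0) ℂ :=
  ∑ i ∈ Hs, ∑ j ∈ Hs, (z ^ i * w ^ j) • (A i j).map Complex.ofReal

/-- `H1(z) = A_{*,0}(z) + A_{*,1}(z) N1(z) A_{*,-1}(z)` (complex). -/
noncomputable def H1C (s0 : ℕ) (A : ℤ → ℤ → Matrix (Fin s0) (Fin s0) ℝ) (z : ℂ) :
    Matrix (Fin s0) (Fin s0) ℂ :=
  AstarC s0 A z 0 + AstarC s0 A z 1 * N1C s0 A z * AstarC s0 A z (-1)

/-- A matrix with row sums one and nonnegative entries. -/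
def IsStochastic {n : ℕ} (M : Matrix (Fin n) (Fin n) ℝ) : Prop :=
  (∀ i j, 0 ≤ M i j) ∧ ∀ i, ∑ j, M i j = 1

end QBDSeries

/-!
Cutting a path of `𝓘_N` (`N ≥ 1`) at its first return to level `0` gives the renewal equation
`Q⁽ᴺ⁾ = Σ_{m+k=N} E⁽ᵐ⁾ Q⁽ᵏ⁾`, where `E⁽ᵐ⁾` sums over the excursions of length `m`; since
`E⁽¹⁾ = A_{*,0}` and `E⁽ᵐ⁺²⁾ = A_{*,1} Q⁽ᵐ⁾ A_{*,-1}`, the excursions sum to `H1`. Likewise,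
removing the last step of a path of `𝓘_{D,n+1}` (the first step of a path of `𝓘_{U,n+1}`)
gives `G1 = N1 A_{*,-1}` and `R1 = A_{*,1} N1`. Bounding the complex path sums entrywise by the
real ones at `|z|` makes all series absolutely convergent, so the renewal equation becomes
`(I - H1) N1 = I`; the factorization is then a ring identity.
-/

open Finset

theorem one_sub_tsum_mul_tsum_eq_one {R : Type*} [NormedRing R] [CompleteSpace R] {e q : ℕ → R}
    (he : Summable fun n => ‖e n‖) (hq : Summable fun n => ‖q n‖) (he₀ : e 0 = 0) (hq₀ : q 0 = 1)
    (hrec : ∀ n, q (n + 1) = ∑ p ∈ antidiagonal (n + 1), e p.1 * q p.2) :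
    (1 - ∑' n, e n) * ∑' n, q n = 1 := by
  have hconv : ∀ n, ∑ p ∈ antidiagonal n, e p.1 * q p.2 = q n - if n = 0 then 1 else 0 := by
    rintro (_ | n)
    · simp [he₀, hq₀]
    · simp [hrec]
  rw [sub_mul, one_mul, tsum_mul_tsum_eq_tsum_sum_antidiagonal_of_summable_norm he hq,
    tsum_congr hconv, hq.of_norm.tsum_sub (summable_of_ne_finset_zero (s := {0}) (by simp_all)),
    tsum_ite_eq]
  abel

namespace Matrix

variable {m n α : Type*}

theorem of_tsum_apply_eq_tsum [AddCommMonoid α] [TopologicalSpace α] [T2Space α]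
    {f : ℕ → Matrix m n α} (hf : Summable f) : of (fun i j => ∑' k, f k i j) = ∑' k, f k := by
  ext i j
  have hrow : Summable fun k => f k i := Pi.summable.mp hf i
  exact ((congrFun (tsum_apply hf) j).trans (tsum_apply hrow)).symm

open scoped Matrix.Norms.Operator in
theorem summable_norm_of_summable_norm_apply [Fintype m] [Fintype n] [SeminormedAddCommGroup α]
    {f : ℕ → Matrix m n α} (h : ∀ i j, Summable fun k => ‖f k i j‖) : Summable fun k => ‖f k‖ := by
  refine (summable_sum (s := univ) fun i _ => summable_sum (s := univ) fun j _ =>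
    h i j).of_nonneg_of_le (fun _ => norm_nonneg _) fun k => ?_
  have hsup : (univ.sup fun i => ∑ j, ‖f k i j‖₊) ≤ ∑ i, ∑ j, ‖f k i j‖₊ :=
    Finset.sup_le fun i hi =>
      Finset.single_le_sum (f := fun i => ∑ j, ‖f k i j‖₊) (fun _ _ => zero_le) hi
  rw [linfty_opNorm_def]
  simpa only [← coe_nnnorm, ← NNReal.coe_sum, NNReal.coe_le_coe] using hsup

section EntrywiseBounds

variable {ι : Type*} [Fintype ι] {𝕜 : Type*} [NormedRing 𝕜]

lemma norm_mul_apply_le {l n : Type*} {M : Matrix l ι 𝕜} {N : Matrix ι n 𝕜} {P : Matrix l ι ℝ}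
    {Q : Matrix ι n ℝ} (hM : ∀ i j, ‖M i j‖ ≤ P i j) (hN : ∀ i j, ‖N i j‖ ≤ Q i j) (i : l) (j : n) :
    ‖(M * N) i j‖ ≤ (P * Q) i j := by
  rw [mul_apply, mul_apply]
  refine (norm_sum_le _ _).trans (sum_le_sum fun c _ => (norm_mul_le _ _).trans ?_)
  exact mul_le_mul (hM i c) (hN c j) (norm_nonneg _) ((norm_nonneg _).trans (hM i c))

variable [DecidableEq ι] [NormOneClass 𝕜] in
lemma norm_list_prod_apply_le : ∀ {k : ℕ} (F : Fin k → Matrix ι ι 𝕜) (G : Fin k → Matrix ι ι ℝ),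
    (∀ r i j, ‖F r i j‖ ≤ G r i j) → ∀ i j, ‖(List.ofFn F).prod i j‖ ≤ (List.ofFn G).prod i j
  | 0, _, _, _, i, j => by by_cases h : i = j <;> simp [h]
  | _ + 1, F, G, h, i, j => by
    rw [List.ofFn_succ, List.ofFn_succ, List.prod_cons, List.prod_cons]
    exact norm_mul_apply_le (h 0) (norm_list_prod_apply_le _ _ fun r => h r.succ) i j

end EntrywiseBounds

end Matrix

theorem one_sub_eq_mul_mul_of_inverse {𝕜 R : Type*} [Field 𝕜] [Ring R] [Algebra 𝕜 R] {w : 𝕜}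
    (hw : w ≠ 0) {N Bm B0 Bp : R} (hl : N * (1 - (B0 + Bp * N * Bm)) = 1)
    (hr : (1 - (B0 + Bp * N * Bm)) * N = 1) :
    1 - (w⁻¹ • Bm + B0 + w • Bp) =
      (w⁻¹ • 1 - Bp * N) * (1 - (B0 + Bp * N * Bm)) * (w • 1 - N * Bm) := by
  set K := 1 - (B0 + Bp * N * Bm) with hK
  have hleft : (w⁻¹ • 1 - Bp * N) * K = w⁻¹ • K - Bp := by
    rw [sub_mul, smul_mul_assoc, one_mul, mul_assoc, hl, mul_one]
  have hKN : K * (N * Bm) = Bm := by rw [← mul_assoc, hr, one_mul]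
  rw [hleft, sub_mul, mul_sub, mul_sub, smul_mul_assoc, smul_mul_assoc, mul_smul_comm, mul_one,
    smul_smul, inv_mul_cancel₀ hw, one_smul, hKN, mul_smul_comm, mul_one, hK, ← mul_assoc]
  abel

namespace QBDSeries

section PartialSums

variable {n : ℕ}

lemma mem_Hs_iff {a : ℤ} : a ∈ Hs ↔ a = -1 ∨ a = 0 ∨ a = 1 := by
  simp [Hs]

lemma psum_eq_sum_ite (σ : Fin n → ℤ) (k : ℕ) :
    psum σ k = ∑ i : Fin n, if (i : ℕ) < k then σ i else 0 := by
  rw [psum, sum_filter]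

@[simp] lemma psum_zero (σ : Fin n → ℤ) : psum σ 0 = 0 := by
  simp [psum_eq_sum_ite]

lemma psum_of_le (σ : Fin n → ℤ) {k : ℕ} (hk : n ≤ k) : psum σ k = ∑ i, σ i := by
  rw [psum_eq_sum_ite]
  exact sum_congr rfl fun i _ => if_pos (i.2.trans_le hk)

lemma psum_cons (a : ℤ) (τ : Fin n → ℤ) (k : ℕ) :
    psum (Fin.cons a τ : Fin (n + 1) → ℤ) (k + 1) = a + psum τ k := by
  rw [psum_eq_sum_ite, Fin.sum_univ_succ, psum_eq_sum_ite]
  simp only [Fin.cons_zero, Fin.cons_succ, Fin.val_zero, Fin.val_succ, Nat.succ_pos, if_true,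
    Nat.add_lt_add_iff_right]

lemma psum_cons_one (a : ℤ) (τ : Fin n → ℤ) : psum (Fin.cons a τ : Fin (n + 1) → ℤ) 1 = a := by
  simpa using psum_cons a τ 0

lemma psum_snoc_of_le (τ : Fin n → ℤ) (a : ℤ) {k : ℕ} (hk : k ≤ n) :
    psum (Fin.snoc τ a : Fin (n + 1) → ℤ) k = psum τ k := by
  rw [psum_eq_sum_ite, Fin.sum_univ_castSucc, psum_eq_sum_ite]
  simp only [Fin.snoc_castSucc, Fin.val_castSucc, Fin.val_last]
  rw [if_neg (by omega), add_zero]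

lemma psum_snoc_self (τ : Fin n → ℤ) (a : ℤ) :
    psum (Fin.snoc τ a : Fin (n + 1) → ℤ) (n + 1) = psum τ n + a := by
  rw [psum_of_le _ le_rfl, psum_of_le τ le_rfl, Fin.sum_univ_castSucc]
  simp

lemma psum_append_of_le {m k : ℕ} (τ₁ : Fin m → ℤ) (τ₂ : Fin k → ℤ) {j : ℕ} (hj : j ≤ m) :
    psum (Fin.append τ₁ τ₂) j = psum τ₁ j := by
  rw [psum_eq_sum_ite, Fin.sum_univ_add, psum_eq_sum_ite]
  simp only [Fin.append_left, Fin.append_right, Fin.val_castAdd, Fin.val_natAdd]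
  have htail : ∑ i : Fin k, (if m + (i : ℕ) < j then τ₂ i else 0) = 0 :=
    sum_eq_zero fun i _ => if_neg (by omega)
  rw [htail, add_zero]

lemma psum_append_add {m k : ℕ} (τ₁ : Fin m → ℤ) (τ₂ : Fin k → ℤ) (j : ℕ) :
    psum (Fin.append τ₁ τ₂) (m + j) = psum τ₁ m + psum τ₂ j := by
  rw [psum_eq_sum_ite, Fin.sum_univ_add, psum_of_le τ₁ le_rfl, psum_eq_sum_ite]
  simp only [Fin.append_left, Fin.append_right, Fin.val_castAdd, Fin.val_natAdd,
    Nat.add_lt_add_iff_left]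
  rw [sum_congr rfl fun i _ => if_pos (by omega)]

end PartialSums

-- Unlike `condQ`, the empty sequence is excluded, so that `E⁽⁰⁾ = 0`.
def IsExcursion (n : ℕ) (σ : Fin n → ℤ) : Prop :=
  0 < n ∧ (∀ k : ℕ, 1 ≤ k → k ≤ n - 1 → 1 ≤ psum σ k) ∧ psum σ n = 0

def IsFirstReturn (m : ℕ) {n : ℕ} (σ : Fin n → ℤ) : Prop :=
  0 < m ∧ psum σ m = 0 ∧ ∀ j, 0 < j → j < m → psum σ j ≠ 0

section Conditions

variable {n : ℕ}

lemma condD_snoc_iff (τ : Fin n → ℤ) {a : ℤ} (ha : a ∈ Hs) :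
    condD (n + 1) (Fin.snoc τ a) ↔ a = -1 ∧ condQ n τ := by
  simp only [condD, condQ, psum_snoc_self, Nat.add_sub_cancel]
  constructor
  · rintro ⟨hpos, htot⟩
    have hprefix : ∀ k, 1 ≤ k → k ≤ n → 0 ≤ psum τ k := fun k hk hkn => by
      simpa only [psum_snoc_of_le τ a hkn] using hpos k hk hkn
    have hn : 0 ≤ psum τ n := by
      rcases n.eq_zero_or_pos with rfl | hn
      · simp
      · exact hprefix n hn le_rfl
    rcases mem_Hs_iff.mp ha with rfl | rfl | rfl
    · exact ⟨rfl, fun k hk hkn => hprefix k hk (by omega), by omega⟩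
    all_goals omega
  · rintro ⟨rfl, hpos, htot⟩
    refine ⟨fun k hk hkn => ?_, by omega⟩
    rw [psum_snoc_of_le τ _ hkn]
    rcases hkn.lt_or_eq with hkn | rfl
    · exact hpos k hk (by omega)
    · exact htot.ge

lemma condU_cons_iff (τ : Fin n → ℤ) {a : ℤ} (ha : a ∈ Hs) :
    condU (n + 1) (Fin.cons a τ) ↔ a = 1 ∧ condQ n τ := by
  simp only [condU, condQ, Nat.add_sub_cancel, psum_cons]
  constructor
  · rintro ⟨hpos, htot⟩
    have ha1 : a = 1 := by
      rcases n.eq_zero_or_pos with rfl | hn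
      · rw [psum_zero] at htot; omega
      · have h1 := hpos 1 le_rfl hn
        rw [psum_cons_one] at h1
        rcases mem_Hs_iff.mp ha with rfl | rfl | rfl <;> omega
    subst ha1
    refine ⟨rfl, fun k hk hkn => ?_, by omega⟩
    have := hpos (k + 1) (by omega) (by omega)
    rw [psum_cons] at this
    omega
  · rintro ⟨rfl, hpos, htot⟩
    refine ⟨fun k hk hkn => ?_, by omega⟩
    obtain ⟨j, rfl⟩ : ∃ j, k = j + 1 := ⟨k - 1, by omega⟩
    rw [psum_cons]
    rcases j.eq_zero_or_pos with rfl | hj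
    · simp
    · have := hpos j hj (by omega)
      omega

lemma isExcursion_cons_iff (τ : Fin (n + 1) → ℤ) {a : ℤ} (ha : a ∈ Hs) :
    IsExcursion (n + 2) (Fin.cons a τ) ↔ a = 1 ∧ condD (n + 1) τ := by
  simp only [IsExcursion, condD, Nat.add_sub_cancel, psum_cons]
  constructor
  · rintro ⟨-, hpos, htot⟩
    have ha1 : a = 1 := by
      have h1 := hpos 1 le_rfl (by omega)
      rw [psum_cons_one] at h1
      rcases mem_Hs_iff.mp ha with rfl | rfl | rfl <;> omega
    subst ha1
    refine ⟨rfl, fun k hk hkn => ?_, by omega⟩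
    have := hpos (k + 1) (by omega) (by omega)
    rw [psum_cons] at this
    omega
  · rintro ⟨rfl, hpos, htot⟩
    refine ⟨by omega, fun k hk hkn => ?_, by omega⟩
    obtain ⟨j, rfl⟩ : ∃ j, k = j + 1 := ⟨k - 1, by omega⟩
    rw [psum_cons]
    rcases j.eq_zero_or_pos with rfl | hj
    · simp
    · have := hpos j hj (by omega)
      omega

lemma isExcursion_one_iff (τ : Fin 0 → ℤ) (a : ℤ) : IsExcursion 1 (Fin.cons a τ) ↔ a = 0 := by
  simp only [IsExcursion, psum_cons_one]
  exact ⟨fun h => h.2.2, fun h => ⟨one_pos, fun k hk hk' => by omega, h⟩⟩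

lemma IsFirstReturn.unique {σ : Fin n → ℤ} {m m' : ℕ} (h : IsFirstReturn m σ)
    (h' : IsFirstReturn m' σ) : m = m' := by
  by_contra hne
  rcases Nat.lt_or_gt_of_ne hne with hlt | hlt
  · exact h'.2.2 m h.1 hlt h.2.1
  · exact h.2.2 m' h'.1 hlt h'.2.1

lemma exists_isFirstReturn_le {σ : Fin n → ℤ} {N : ℕ} (hN : 0 < N) (h : psum σ N = 0) :
    ∃ m ≤ N, IsFirstReturn m σ := by
  classical
  have hex : ∃ m, 0 < m ∧ psum σ m = 0 := ⟨N, hN, h⟩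
  obtain ⟨hpos, hzero⟩ := Nat.find_spec hex
  exact ⟨Nat.find hex, Nat.find_min' hex ⟨hN, h⟩, hpos, hzero,
    fun j hj hjm hj0 => Nat.find_min hex hjm ⟨hj, hj0⟩⟩

lemma condQ_and_isFirstReturn_append_iff {m k : ℕ} (τ₁ : Fin m → ℤ) (τ₂ : Fin k → ℤ) :
    condQ (m + k) (Fin.append τ₁ τ₂) ∧ IsFirstReturn m (Fin.append τ₁ τ₂) ↔
      IsExcursion m τ₁ ∧ condQ k τ₂ := by
  simp only [condQ, IsExcursion, IsFirstReturn, psum_append_add, psum_append_of_le τ₁ τ₂ le_rfl]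
  constructor
  · rintro ⟨⟨hQ, htot⟩, hm, hret, hfirst⟩
    refine ⟨⟨hm, fun j hj hjm => ?_, hret⟩, fun j hj hjk => ?_, by omega⟩
    · have h1 := hQ j hj (by omega)
      have h2 := hfirst j hj (by omega)
      rw [psum_append_of_le τ₁ τ₂ (by omega)] at h1 h2
      omega
    · have := hQ (m + j) (by omega) (by omega)
      rw [psum_append_add] at this
      omega
  · rintro ⟨⟨hm, hexc, hret⟩, hQ, htot⟩
    refine ⟨⟨fun j hj hjn => ?_, by omega⟩, hm, hret, fun j hj hjm => ?_⟩
    · rcases le_or_gt j m with hjm | hjm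
      · rw [psum_append_of_le τ₁ τ₂ hjm]
        rcases hjm.lt_or_eq with hjm | rfl
        · have := hexc j hj (by omega)
          omega
        · exact hret.ge
      · obtain ⟨i, rfl⟩ : ∃ i, j = m + i := ⟨j - m, by omega⟩
        rw [psum_append_add]
        rcases i.eq_zero_or_pos with rfl | hi
        · simp [hret]
        · have := hQ i hi (by omega)
          omega
    · rw [psum_append_of_le τ₁ τ₂ hjm.le]
      have := hexc j hj (by omega)
      omega

end Conditions

section PathSum

variable {R : Type*} [Semiring R] (S : Finset ℤ) (f : ℤ → R)

open Classical in
/-- `pathSumC s0 A z` and `pathSumR s0 A x` are `pathSum Hs (AstarC s0 A z)` and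
`pathSum Hs (AstarR s0 A x)` by definition. -/
noncomputable def pathSum (n : ℕ) (cond : (Fin n → ℤ) → Prop) : R :=
  ∑ σ : Fin n → S, if cond (fun k => (σ k : ℤ)) then (List.ofFn fun k => f (σ k)).prod else 0

@[simp] lemma pathSum_false (n : ℕ) : pathSum S f n (fun _ => False) = 0 := by
  simp [pathSum]

open Classical in
lemma pathSum_nil (cond : (Fin 0 → ℤ) → Prop) :
    pathSum S f 0 cond = if cond ![] then 1 else 0 := by
  simp only [pathSum, Fintype.sum_unique, List.ofFn_zero, List.prod_nil]
  congr!

lemma pathSum_succ (n : ℕ) (cond : (Fin (n + 1) → ℤ) → Prop) :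
    pathSum S f (n + 1) cond =
      ∑ a ∈ S, f a * pathSum S f n (fun τ => cond (Fin.cons a τ)) := by
  classical
  rw [pathSum, ← (Fin.consEquiv fun _ => S).sum_comp, Fintype.sum_prod_type, ← sum_coe_sort S]
  refine sum_congr rfl fun a _ => ?_
  rw [pathSum, mul_sum]
  refine sum_congr rfl fun τ _ => ?_
  have hcoe : (fun k => ((Fin.cons a τ : Fin (n + 1) → S) k : ℤ)) = Fin.cons (a : ℤ) fun k => τ k :=
    funext fun k => Fin.cases rfl (fun _ => rfl) k
  simp only [Fin.consEquiv_apply, hcoe, List.ofFn_succ, Fin.cons_zero, Fin.cons_succ,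
    List.prod_cons, mul_ite, mul_zero]

lemma pathSum_succ' (n : ℕ) (cond : (Fin (n + 1) → ℤ) → Prop) :
    pathSum S f (n + 1) cond =
      ∑ a ∈ S, pathSum S f n (fun τ => cond (Fin.snoc τ a)) * f a := by
  classical
  rw [pathSum, ← (Fin.snocEquiv fun _ => S).sum_comp, Fintype.sum_prod_type, ← sum_coe_sort S]
  refine sum_congr rfl fun a _ => ?_
  rw [pathSum, sum_mul]
  refine sum_congr rfl fun τ _ => ?_
  have hcoe :
      (fun k => ((Fin.snoc τ a : Fin (n + 1) → S) k : ℤ)) = Fin.snoc (fun k => (τ k : ℤ)) a :=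
    funext fun k => Fin.lastCases (by simp) (fun _ => by simp) k
  simp only [Fin.snocEquiv_apply, hcoe, List.ofFn_succ', Fin.snoc_last, Fin.snoc_castSucc,
    List.prod_concat, ite_mul, zero_mul]

lemma pathSum_add (m k : ℕ) (cond₁ : (Fin m → ℤ) → Prop) (cond₂ : (Fin k → ℤ) → Prop) :
    pathSum S f (m + k)
        (fun σ => cond₁ (fun i => σ (Fin.castAdd k i)) ∧ cond₂ (fun j => σ (Fin.natAdd m j))) =
      pathSum S f m cond₁ * pathSum S f k cond₂ := by
  classical
  rw [pathSum, ← (Fin.appendEquiv m k).sum_comp, Fintype.sum_prod_type, pathSum, pathSum,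
    sum_mul_sum]
  refine sum_congr rfl fun τ₁ _ => sum_congr rfl fun τ₂ _ => ?_
  rw [ite_zero_mul_ite_zero, List.ofFn_add, List.prod_append]
  simp only [Fin.appendEquiv_apply, Fin.append_left, Fin.append_left', Fin.append_right]

lemma pathSum_eq_sum_of_existsUnique {ι : Type*} (n : ℕ) (cond : (Fin n → ℤ) → Prop)
    (s : Finset ι) (P : ι → (Fin n → ℤ) → Prop) (h : ∀ σ, cond σ → ∃! i, i ∈ s ∧ P i σ) :
    pathSum S f n cond = ∑ i ∈ s, pathSum S f n (fun σ => cond σ ∧ P i σ) := by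
  classical
  simp only [pathSum]
  rw [sum_comm]
  refine sum_congr rfl fun σ _ => ?_
  by_cases hσ : cond (fun k => (σ k : ℤ))
  · obtain ⟨i, ⟨hi, hP⟩, huniq⟩ := h _ hσ
    rw [if_pos hσ, sum_eq_single_of_mem i hi, if_pos ⟨hσ, hP⟩]
    intro j hj hji
    exact if_neg fun hj' => hji (huniq j ⟨hj, hj'.2⟩)
  · rw [if_neg hσ]
    exact (sum_eq_zero fun i _ => if_neg fun h' => hσ h'.1).symm

lemma pathSum_succ_of_cons_iff {n : ℕ} {cond : (Fin (n + 1) → ℤ) → Prop}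
    {cond' : (Fin n → ℤ) → Prop} {a₀ : ℤ} (ha₀ : a₀ ∈ S)
    (h : ∀ a ∈ S, ∀ τ, cond (Fin.cons a τ) ↔ a = a₀ ∧ cond' τ) :
    pathSum S f (n + 1) cond = f a₀ * pathSum S f n cond' := by
  rw [pathSum_succ, sum_eq_single_of_mem a₀ ha₀]
  · simp only [h a₀ ha₀, true_and]
  · intro a ha hne
    simp only [h a ha, hne, false_and, pathSum_false, mul_zero]

lemma pathSum_succ_of_snoc_iff {n : ℕ} {cond : (Fin (n + 1) → ℤ) → Prop}
    {cond' : (Fin n → ℤ) → Prop} {a₀ : ℤ} (ha₀ : a₀ ∈ S)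
    (h : ∀ a ∈ S, ∀ τ, cond (Fin.snoc τ a) ↔ a = a₀ ∧ cond' τ) :
    pathSum S f (n + 1) cond = pathSum S f n cond' * f a₀ := by
  rw [pathSum_succ', sum_eq_single_of_mem a₀ ha₀]
  · simp only [h a₀ ha₀, true_and]
  · intro a ha hne
    simp only [h a ha, hne, false_and, pathSum_false, zero_mul]

end PathSum

section Decompositions

variable {R : Type*} [Semiring R] (S : Finset ℤ) (f : ℤ → R)

lemma pathSum_condQ_zero : pathSum S f 0 (condQ 0) = 1 := by
  rw [pathSum_nil, if_pos ⟨fun k hk hk' => by omega, psum_zero _⟩]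

lemma pathSum_condD_zero : pathSum S f 0 (condD 0) = 0 := by
  rw [pathSum_nil, if_neg fun h => by simp [condD] at h]

lemma pathSum_condU_zero : pathSum S f 0 (condU 0) = 0 := by
  rw [pathSum_nil, if_neg fun h => by simp [condU] at h]

lemma pathSum_isExcursion_zero : pathSum S f 0 (IsExcursion 0) = 0 := by
  rw [pathSum_nil, if_neg fun h => h.1.false]

lemma pathSum_condQ_and_isFirstReturn (m k : ℕ) :
    pathSum S f (m + k) (fun σ => condQ (m + k) σ ∧ IsFirstReturn m σ) =
      pathSum S f m (IsExcursion m) * pathSum S f k (condQ k) := by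
  rw [← pathSum_add]
  congr 1
  funext σ
  rw [← condQ_and_isFirstReturn_append_iff, Fin.append_castAdd_natAdd]

lemma pathSum_condQ_eq_sum {N : ℕ} (hN : 0 < N) :
    pathSum S f N (condQ N) =
      ∑ p ∈ antidiagonal N, pathSum S f p.1 (IsExcursion p.1) * pathSum S f p.2 (condQ p.2) := by
  rw [pathSum_eq_sum_of_existsUnique S f _ _ (antidiagonal N) fun p σ => IsFirstReturn p.1 σ]
  · refine sum_congr rfl fun ⟨m, k⟩ hp => ?_
    rw [HasAntidiagonal.mem_antidiagonal] at hp
    subst hp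
    exact pathSum_condQ_and_isFirstReturn S f m k
  · intro σ hσ
    obtain ⟨m, hmN, hm⟩ := exists_isFirstReturn_le hN hσ.2
    refine ⟨(m, N - m), ⟨HasAntidiagonal.mem_antidiagonal.mpr (Nat.add_sub_cancel' hmN), hm⟩, ?_⟩
    rintro ⟨m', k'⟩ ⟨hp, hm'⟩
    obtain rfl : m' = m := hm'.unique hm
    rw [HasAntidiagonal.mem_antidiagonal] at hp
    simp only [Prod.mk.injEq, true_and]
    omega

lemma pathSum_condD_succ (n : ℕ) :
    pathSum Hs f (n + 1) (condD (n + 1)) = pathSum Hs f n (condQ n) * f (-1) :=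
  pathSum_succ_of_snoc_iff Hs f (by simp [Hs]) fun _ ha τ => condD_snoc_iff τ ha

lemma pathSum_condU_succ (n : ℕ) :
    pathSum Hs f (n + 1) (condU (n + 1)) = f 1 * pathSum Hs f n (condQ n) :=
  pathSum_succ_of_cons_iff Hs f (by simp [Hs]) fun _ ha τ => condU_cons_iff τ ha

lemma pathSum_isExcursion_one : pathSum Hs f 1 (IsExcursion 1) = f 0 := by
  rw [pathSum_succ_of_cons_iff Hs f (cond' := fun _ => True) (a₀ := 0) (by simp [Hs])
    fun a _ τ => by rw [isExcursion_one_iff, and_true], pathSum_nil, if_pos trivial, mul_one]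

lemma pathSum_isExcursion_add_two (m : ℕ) :
    pathSum Hs f (m + 2) (IsExcursion (m + 2)) = f 1 * (pathSum Hs f m (condQ m) * f (-1)) := by
  rw [pathSum_succ_of_cons_iff Hs f (by simp [Hs]) fun _ ha τ => isExcursion_cons_iff τ ha,
    pathSum_condD_succ]

end Decompositions

section Domination

variable {ι : Type*} [Fintype ι] [DecidableEq ι] {𝕜 : Type*} [NormedRing 𝕜] [NormOneClass 𝕜]

lemma norm_pathSum_apply_le (S : Finset ℤ) {f : ℤ → Matrix ι ι 𝕜} {g : ℤ → Matrix ι ι ℝ}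
    (h : ∀ a i j, ‖f a i j‖ ≤ g a i j) (n : ℕ) (cond : (Fin n → ℤ) → Prop) (i j : ι) :
    ‖pathSum S f n cond i j‖ ≤ pathSum S g n cond i j := by
  simp only [pathSum, Matrix.sum_apply]
  refine (norm_sum_le _ _).trans (sum_le_sum fun σ _ => ?_)
  split_ifs
  · exact Matrix.norm_list_prod_apply_le _ _ (fun r => h _) i j
  · simp

end Domination

lemma sum_Hs {M : Type*} [AddCommMonoid M] (g : ℤ → M) : ∑ i ∈ Hs, g i = g (-1) + g 0 + g 1 := by
  simp [Hs, add_assoc]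

noncomputable def EmatC (s0 : ℕ) (A : ℤ → ℤ → Matrix (Fin s0) (Fin s0) ℝ) (z : ℂ) (m : ℕ) :
    Matrix (Fin s0) (Fin s0) ℂ := pathSum Hs (AstarC s0 A z) m (IsExcursion m)

section Model

variable {s0 : ℕ} {A : ℤ → ℤ → Matrix (Fin s0) (Fin s0) ℝ} {z : ℂ}

lemma CmatC_eq (w : ℂ) :
    CmatC s0 A z w = w⁻¹ • AstarC s0 A z (-1) + AstarC s0 A z 0 + w • AstarC s0 A z 1 := by
  ext a b
  simp only [CmatC, AstarC, sum_Hs, Matrix.add_apply, Matrix.smul_apply, Matrix.sum_apply,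
    Matrix.map_apply, smul_eq_mul, zpow_zero, zpow_one, zpow_neg]
  ring

lemma QmatC_zero : QmatC s0 A z 0 = 1 :=
  pathSum_condQ_zero _ _

lemma DmatC_zero : DmatC s0 A z 0 = 0 :=
  pathSum_condD_zero _ _

lemma UmatC_zero : UmatC s0 A z 0 = 0 :=
  pathSum_condU_zero _ _

lemma DmatC_succ (n : ℕ) : DmatC s0 A z (n + 1) = QmatC s0 A z n * AstarC s0 A z (-1) :=
  pathSum_condD_succ _ n

lemma UmatC_succ (n : ℕ) : UmatC s0 A z (n + 1) = AstarC s0 A z 1 * QmatC s0 A z n :=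
  pathSum_condU_succ _ n

lemma EmatC_zero : EmatC s0 A z 0 = 0 :=
  pathSum_isExcursion_zero _ _

lemma EmatC_one : EmatC s0 A z 1 = AstarC s0 A z 0 :=
  pathSum_isExcursion_one _

lemma EmatC_add_two (m : ℕ) :
    EmatC s0 A z (m + 2) = AstarC s0 A z 1 * (QmatC s0 A z m * AstarC s0 A z (-1)) :=
  pathSum_isExcursion_add_two _ m

lemma norm_AstarC_apply_le (hAnn : ∀ i j : ℤ, ∀ k l, 0 ≤ A i j k l) (a : ℤ) (i j : Fin s0) :
    ‖AstarC s0 A z a i j‖ ≤ AstarR s0 A ‖z‖ a i j := by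
  simp only [AstarC, AstarR, Matrix.sum_apply, Matrix.smul_apply, Matrix.map_apply, smul_eq_mul]
  refine (norm_sum_le _ _).trans (sum_le_sum fun b _ => ?_)
  rw [norm_mul, norm_zpow, Complex.norm_real, Real.norm_of_nonneg (hAnn b a i j)]

open scoped Matrix.Norms.Operator in
lemma summable_norm_QmatC (hAnn : ∀ i j : ℤ, ∀ k l, 0 ≤ A i j k l)
    (hN : ∀ i j, Summable fun n : ℕ => QmatR s0 A ‖z‖ n i j) :
    Summable fun n => ‖QmatC s0 A z n‖ :=
  Matrix.summable_norm_of_summable_norm_apply fun i j =>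
    (hN i j).of_nonneg_of_le (fun _ => norm_nonneg _) fun n =>
      norm_pathSum_apply_le Hs (norm_AstarC_apply_le hAnn) n _ i j

lemma summable_QmatC (hAnn : ∀ i j : ℤ, ∀ k l, 0 ≤ A i j k l)
    (hN : ∀ i j, Summable fun n : ℕ => QmatR s0 A ‖z‖ n i j) : Summable (QmatC s0 A z) :=
  open scoped Matrix.Norms.Operator in (summable_norm_QmatC hAnn hN).of_norm

lemma N1C_eq_tsum (hQ : Summable (QmatC s0 A z)) : N1C s0 A z = ∑' n, QmatC s0 A z n :=
  Matrix.of_tsum_apply_eq_tsum hQ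

lemma G1C_eq (hQ : Summable (QmatC s0 A z)) : G1C s0 A z = N1C s0 A z * AstarC s0 A z (-1) := by
  have hD : Summable (DmatC s0 A z) := by
    refine (summable_nat_add_iff 1).mp ?_
    simpa only [DmatC_succ] using hQ.mul_right (AstarC s0 A z (-1))
  rw [G1C, Matrix.of_tsum_apply_eq_tsum hD, hD.tsum_eq_zero_add, N1C_eq_tsum hQ,
    ← hQ.tsum_mul_right, DmatC_zero, zero_add]
  simp only [DmatC_succ]

lemma R1C_eq (hQ : Summable (QmatC s0 A z)) : R1C s0 A z = AstarC s0 A z 1 * N1C s0 A z := by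
  have hU : Summable (UmatC s0 A z) := by
    refine (summable_nat_add_iff 1).mp ?_
    simpa only [UmatC_succ] using hQ.mul_left (AstarC s0 A z 1)
  rw [R1C, Matrix.of_tsum_apply_eq_tsum hU, hU.tsum_eq_zero_add, N1C_eq_tsum hQ,
    ← hQ.tsum_mul_left, UmatC_zero, zero_add]
  simp only [UmatC_succ]

lemma H1C_eq_tsum (hQ : Summable (QmatC s0 A z)) : H1C s0 A z = ∑' m, EmatC s0 A z m := by
  have hE : Summable (EmatC s0 A z) := by
    refine (summable_nat_add_iff 2).mp ?_
    simpa only [EmatC_add_two] using (hQ.mul_right (AstarC s0 A z (-1))).mul_left (AstarC s0 A z 1)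
  rw [hE.tsum_eq_zero_add, ((summable_nat_add_iff 1).mpr hE).tsum_eq_zero_add]
  simp only [EmatC_add_two, EmatC_zero, EmatC_one, zero_add]
  rw [(hQ.mul_right _).tsum_mul_left, hQ.tsum_mul_right, H1C, N1C_eq_tsum hQ, mul_assoc]

open scoped Matrix.Norms.Operator in
lemma summable_norm_EmatC (hQ : Summable fun n => ‖QmatC s0 A z n‖) :
    Summable fun m => ‖EmatC s0 A z m‖ := by
  refine (summable_nat_add_iff 2).mp <| ((hQ.mul_right ‖AstarC s0 A z (-1)‖).mul_left
    ‖AstarC s0 A z 1‖).of_nonneg_of_le (fun _ => norm_nonneg _) fun m => ?_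
  rw [EmatC_add_two]
  exact (norm_mul_le _ _).trans (by gcongr; exact norm_mul_le _ _)

open scoped Matrix.Norms.Operator in
lemma one_sub_H1C_mul_N1C (hAnn : ∀ i j : ℤ, ∀ k l, 0 ≤ A i j k l)
    (hN : ∀ i j, Summable fun n : ℕ => QmatR s0 A ‖z‖ n i j) :
    (1 - H1C s0 A z) * N1C s0 A z = 1 := by
  have hQ := summable_norm_QmatC hAnn hN
  rw [H1C_eq_tsum (summable_QmatC hAnn hN), N1C_eq_tsum (summable_QmatC hAnn hN)]
  exact one_sub_tsum_mul_tsum_eq_one (summable_norm_EmatC hQ) hQ EmatC_zero QmatC_zero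
    fun n => pathSum_condQ_eq_sum _ _ n.succ_pos

end Model

end QBDSeries

open QBDSeries in
theorem statement10_general
    (s0 : ℕ)
    (A : ℤ → ℤ → Matrix (Fin s0) (Fin s0) ℝ)
    (hAnn : ∀ i j : ℤ, ∀ k l, 0 ≤ A i j k l)
    (z : ℂ)
    (hN : ∀ i j, Summable fun n : ℕ => QmatR s0 A ‖z‖ n i j) :
    ∀ w : ℂ, w ≠ 0 →
      (1 : Matrix (Fin s0) (Fin s0) ℂ) - CmatC s0 A z w =
        (w⁻¹ • (1 : Matrix (Fin s0) (Fin s0) ℂ) - R1C s0 A z) * (1 - H1C s0 A z) *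
          (w • (1 : Matrix (Fin s0) (Fin s0) ℂ) - G1C s0 A z) := by
  intro w hw
  have hQ := summable_QmatC hAnn hN
  have hright := one_sub_H1C_mul_N1C hAnn hN
  rw [CmatC_eq, G1C_eq hQ, R1C_eq hQ]
  exact one_sub_eq_mul_mul_of_inverse hw (mul_eq_one_comm.mp hright) hright

open QBDSeries in
/-- the Wiener–Hopf factorization
`I − C(z,w) = (w⁻¹ I − R1(z)) (I − H1(z)) (w I − G1(z))` for every nonzero `w`. -/
theorem statement10
    (s0 : ℕ) (hs0 : 1 ≤ s0)
    (A : ℤ → ℤ → Matrix (Fin s0) (Fin s0) ℝ)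
    (hAsupp : ∀ i j : ℤ, ¬(i ∈ Hs ∧ j ∈ Hs) → A i j = 0)
    (hAnn : ∀ i j : ℤ, ∀ k l, 0 ≤ A i j k l)
    (hAst : IsStochastic (∑ i ∈ Hs, ∑ j ∈ Hs, A i j))
    (z : ℂ) (hz : z ≠ 0)
    (hN : ∀ i j, Summable fun n : ℕ => QmatR s0 A ‖z‖ n i j)
    (hG : ∀ i j, Summable fun n : ℕ => DmatR s0 A ‖z‖ n i j)
    (hR : ∀ i j, Summable fun n : ℕ => UmatR s0 A ‖z‖ n i j) :
    ∀ w : ℂ, w ≠ 0 →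
      (1 : Matrix (Fin s0) (Fin s0) ℂ) - CmatC s0 A z w =
        (w⁻¹ • (1 : Matrix (Fin s0) (Fin s0) ℂ) - R1C s0 A z) * (1 - H1C s0 A z) *
          (w • (1 : Matrix (Fin s0) (Fin s0) ℂ) - G1C s0 A z) :=
  statement10_general s0 A hAnn z hN
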